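/- arXiv:2604.04550 — 5 statements merged into one kernel-verified Lean document; each statement's English description precedes it below -/
import Mathlib

section
/- Let M be a matroid and 𝓜 a proper modular cut of M. If F is a minimal element of 𝓜, then the flat F ∪ {e} of the single-element extension M ∪_𝓜 e is irreducible, i.e., it cannot be written as a disjoint union of two nonempty flats G, H of M ∪_𝓜 e with rk(F ∪ {e}) = rk(G) + rk(H). -/
/-! Say `e ∈ G` and put `G' = G \ {e}`, so that `G' ∪ H = F` and `rk (F ∪ e) = rk F`.
If `cl G' ∈ 𝓜`, minimality of `F` forces `cl G' = F`, so `G` alone has rank `rk F`, while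
`H`, being nonempty and disjoint from the flat `G`, contains a nonloop and has positive rank.
Otherwise `rk G = rk G' + 1`, and `rk F ≤ rk G' + rk H < rk G + rk H` by subadditivity.
Either way `rk (F ∪ e) < rk G + rk H`. -/

variable {α : Type*}

/-- The rank of a set in a matroid: the supremum of the cardinalities of
independent subsets of the set. -/
noncomputable def Matroid.mrk (M : Matroid α) (X : Set α) : ℕ :=
  sSup (Set.ncard '' {I | M.Indep I ∧ I ⊆ X})

/-- A *modular cut* of a matroid `M`: an upward-closed (within the lattice of
flats) family of flats of `M` which is closed under meets of modular pairs. -/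
def Matroid.IsModularCutFam (M : Matroid α) (𝓜 : Set (Set α)) : Prop :=
  (∀ F ∈ 𝓜, M.IsFlat F) ∧
  (∀ F ∈ 𝓜, ∀ G : Set α, M.IsFlat G → F ⊆ G → G ∈ 𝓜) ∧
  (∀ F ∈ 𝓜, ∀ G ∈ 𝓜,
    M.mrk (F ∪ G) + M.mrk (F ∩ G) = M.mrk F + M.mrk G → F ∩ G ∈ 𝓜)

/-- `N` is the single-element extension `M ∪_𝓜 e` of `M` along the modular cut
`𝓜`: it is the matroid on `M.E ∪ {e}` whose rank function satisfies
`rk_N S = rk_M S` for `S ⊆ M.E`, and `rk_N (S ∪ {e}) = rk_M S` if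
`cl_M S ∈ 𝓜`, and `rk_M S + 1` otherwise. -/
def Matroid.IsSingleElemExt (M : Matroid α) (𝓜 : Set (Set α)) (e : α)
    (N : Matroid α) : Prop :=
  N.E = insert e M.E ∧
  (∀ S : Set α, S ⊆ M.E → N.mrk S = M.mrk S) ∧
  (∀ S : Set α, S ⊆ M.E → M.closure S ∈ 𝓜 → N.mrk (insert e S) = M.mrk S) ∧
  (∀ S : Set α, S ⊆ M.E → M.closure S ∉ 𝓜 →
    N.mrk (insert e S) = M.mrk S + 1)



namespace Matroid

section mrk

variable (M : Matroid α) [M.RankFinite]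

lemma cast_mrk_eq_eRk (X : Set α) : (M.mrk X : ℕ∞) = M.eRk X := by
  obtain ⟨I, hI⟩ := M.exists_isBasis' X
  have hIfin := hI.indep.finite
  suffices IsGreatest (Set.ncard '' {J | M.Indep J ∧ J ⊆ X}) I.ncard by
    rw [mrk, this.csSup_eq, hIfin.cast_ncard_eq, hI.encard_eq_eRk]
  refine ⟨⟨I, ⟨hI.indep, hI.subset⟩, rfl⟩, ?_⟩
  rintro _ ⟨J, ⟨hJ, hJX⟩, rfl⟩
  have hJI : J.encard ≤ I.encard := by
    rw [← hJ.eRk_eq_encard, hI.encard_eq_eRk]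
    exact M.eRk_mono hJX
  rw [← hJ.finite.cast_ncard_eq, ← hIfin.cast_ncard_eq] at hJI
  exact_mod_cast hJI

lemma mrk_closure_eq (X : Set α) : M.mrk (M.closure X) = M.mrk X := by
  have h := M.eRk_closure_eq X
  rw [← cast_mrk_eq_eRk, ← cast_mrk_eq_eRk] at h
  exact_mod_cast h

lemma mrk_union_le (X Y : Set α) : M.mrk (X ∪ Y) ≤ M.mrk X + M.mrk Y := by
  have h := M.eRk_union_le_eRk_add_eRk X Y
  rw [← cast_mrk_eq_eRk, ← cast_mrk_eq_eRk, ← cast_mrk_eq_eRk] at h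
  exact_mod_cast h

variable {M} in
lemma mrk_eq_zero_iff {X : Set α} (hX : X ⊆ M.E) : M.mrk X = 0 ↔ X ⊆ M.loops := by
  rw [← eRk_eq_zero_iff hX, ← cast_mrk_eq_eRk, Nat.cast_eq_zero]

end mrk

namespace IsSingleElemExt

variable {M N : Matroid α} {𝓜 : Set (Set α)} {e : α} {F S G H : Set α}

lemma finite [M.Finite] (hN : M.IsSingleElemExt 𝓜 e N) : N.Finite :=
  ⟨hN.1 ▸ M.ground_finite.insert e⟩

lemma mrk_insert_eq_of_closure_mem [M.RankFinite] (hN : M.IsSingleElemExt 𝓜 e N)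
    (hFflat : M.IsFlat F) (hmin : ∀ G ∈ 𝓜, G ⊆ F → G = F) (hSF : S ⊆ F)
    (hS : M.closure S ∈ 𝓜) : N.mrk (insert e S) = M.mrk F := by
  have hclS : M.closure S = F :=
    hmin _ hS (hFflat.closure ▸ M.closure_subset_closure hSF)
  rw [hN.2.2.1 S (hSF.trans hFflat.subset_ground) hS, ← M.mrk_closure_eq S, hclS]

lemma mrk_insert_lt_of_mem_left [M.RankFinite] [N.RankFinite]
    (hN : M.IsSingleElemExt 𝓜 e N) (he : e ∉ M.E) (hF : F ∈ 𝓜) (hFflat : M.IsFlat F)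
    (hmin : ∀ G ∈ 𝓜, G ⊆ F → G = F) (hG : N.IsFlat G) (hH : H.Nonempty)
    (hGH : Disjoint G H) (hunion : G ∪ H = insert e F) (heG : e ∈ G) :
    N.mrk (insert e F) < N.mrk G + N.mrk H := by
  set G' := G \ {e}
  have heF : e ∉ F := fun h ↦ he (hFflat.subset_ground h)
  have hG' : insert e G' = G := by rw [Set.insert_sdiff_singleton, Set.insert_eq_of_mem heG]
  have hsplit : G' ∪ H = F := by
    rw [← Set.sdiff_singleton_eq_self (hGH.notMem_of_mem_left heG), ← Set.union_sdiff_distrib,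
      hunion, Set.insert_sdiff_self_of_notMem heF]
  have hG'F : G' ⊆ F := hsplit ▸ Set.subset_union_left
  have hHE : H ⊆ M.E := (hsplit ▸ Set.subset_union_right).trans hFflat.subset_ground
  have hrF : N.mrk (insert e F) = M.mrk F :=
    hN.2.2.1 F hFflat.subset_ground (by rwa [hFflat.closure])
  have hrH : N.mrk H = M.mrk H := hN.2.1 H hHE
  by_cases hcl : M.closure G' ∈ 𝓜
  · have hrG : N.mrk G = M.mrk F := hG' ▸ hN.mrk_insert_eq_of_closure_mem hFflat hmin hG'F hcl
    have hH0 : N.mrk H ≠ 0 := by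
      rw [Ne, mrk_eq_zero_iff (hHE.trans (hN.1 ▸ Set.subset_insert e M.E))]
      obtain ⟨x, hx⟩ := hH
      exact fun hloops ↦ hGH.notMem_of_mem_right hx (hG.loops_subset (hloops hx))
    omega
  · have hrG : N.mrk G = M.mrk G' + 1 :=
      hG' ▸ hN.2.2.2 G' (hG'F.trans hFflat.subset_ground) hcl
    have hsub := M.mrk_union_le G' H
    rw [hsplit] at hsub
    omega

end IsSingleElemExt

end Matroid

theorem ext_min_modular_cut_irreducible_general (M : Matroid α) [M.Finite]
    (𝓜 : Set (Set α)) (h𝓜 : M.IsModularCutFam 𝓜)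
    (e : α) (he : e ∉ M.E) (N : Matroid α)
    (hN : M.IsSingleElemExt 𝓜 e N) (F : Set α) (hF : F ∈ 𝓜)
    (hmin : ∀ G ∈ 𝓜, G ⊆ F → G = F) :
    ¬ ∃ G H : Set α, N.IsFlat G ∧ N.IsFlat H ∧ G.Nonempty ∧ H.Nonempty ∧
      Disjoint G H ∧ G ∪ H = insert e F ∧
      N.mrk (insert e F) = N.mrk G + N.mrk H := by
  rintro ⟨G, H, hG, hH, hGne, hHne, hGH, hunion, hrk⟩
  have := hN.finite
  have hFflat := h𝓜.1 F hF
  rcases (hunion ▸ Set.mem_insert e F : e ∈ G ∪ H) with heG | heH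
  · exact (hN.mrk_insert_lt_of_mem_left he hF hFflat hmin hG hHne hGH hunion heG).ne hrk
  · refine (hN.mrk_insert_lt_of_mem_left he hF hFflat hmin hH hGne hGH.symm
      (by rwa [Set.union_comm]) heH).ne ?_
    rw [hrk, add_comm]

/-- if `F` is a minimal element of a proper modular cut `𝓜`, then
the flat `F ∪ {e}` of the single-element extension `M ∪_𝓜 e` is irreducible:
it cannot be partitioned into two nonempty flats whose ranks add up to its
rank. -/
theorem ext_min_modular_cut_irreducible (M : Matroid α) [M.Finite]
    (𝓜 : Set (Set α)) (h𝓜 : M.IsModularCutFam 𝓜)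
    (hproper : M.closure ∅ ∉ 𝓜) (e : α) (he : e ∉ M.E) (N : Matroid α)
    (hN : M.IsSingleElemExt 𝓜 e N) (F : Set α) (hF : F ∈ 𝓜)
    (hmin : ∀ G ∈ 𝓜, G ⊆ F → G = F) :
    ¬ ∃ G H : Set α, N.IsFlat G ∧ N.IsFlat H ∧ G.Nonempty ∧ H.Nonempty ∧
      Disjoint G H ∧ G ∪ H = insert e F ∧
      N.mrk (insert e F) = N.mrk G + N.mrk H :=
  ext_min_modular_cut_irreducible_general M 𝓜 h𝓜 e he N hN F hF hmin
end

section
/- Let L be a geometric lattice and 𝓖 a building set of L. For any G ∈ 𝓖, the set 𝓖 \ {G} is a building set of L if and only if the join map gives a poset isomorphism from the product of intervals ∏_{F ∈ max (𝓖\{G\})_{≤G}} [0̂, F] onto [0̂, G], where (𝓖\{G})_{≤G} denotes the elements of 𝓖\{G} below G and max denotes its maximal elements. -/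
/-!
The join map `∏_{x ∈ S} [⊥, x] → [⊥, F]` is an order isomorphism exactly when it is inverted by
the meet map `y ↦ (y ⊓ x)_{x ∈ S}`; this turns the building-set condition into the lattice
identities of `IsJoinDecomposition`. If `G` is not maximal in `𝓖` below `F`, removing it does not
change the maximal elements below `F`. If it is, the maximal elements of `𝓖 \ {G}` below `F` are
the other maximal elements of `𝓖` together with those of `𝓖 \ {G}` below `G` (distinct maximal
elements are disjoint and `⊥ ∉ 𝓖`), and the decomposition of `[⊥, G]` refines the factor
`[⊥, G]` of the decomposition of `[⊥, F]`.
-/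

variable {L : Type*} [CompleteLattice L] [Fintype L]

/-- A finite lattice is geometric if it is atomistic and (upper)
semimodular. -/
def IsGeometricLattice (L : Type*) [CompleteLattice L] [Fintype L] : Prop :=
  IsAtomistic L ∧ ∀ a b : L, a ⊓ b ⋖ a → b ⋖ a ⊔ b

/-- The maximal elements of `{G ∈ 𝓖 : G ≤ F}`. -/
def maxUnder (𝓖 : Set L) (F : L) : Set L :=
  {G | G ∈ 𝓖 ∧ G ≤ F ∧ ∀ G' ∈ 𝓖, G' ≤ F → G ≤ G' → G' = G}

/-- `𝓖 ⊆ L \ {⊥}` is a *building set* if for every `F ≠ ⊥`, the join map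
from the product of the intervals `[⊥, G]`, `G` ranging over the maximal
elements of `𝓖` below `F`, to the interval `[⊥, F]` is an order
isomorphism. -/
def IsBuildingSet (𝓖 : Set L) : Prop :=
  (∀ G ∈ 𝓖, G ≠ ⊥) ∧
  ∀ F : L, F ≠ ⊥ →
    ∃ φ : (∀ G : maxUnder 𝓖 F, Set.Iic (G : L)) ≃o Set.Iic F,
      ∀ h, (φ h : L) = ⨆ G, ((h G : L))

open Set

section JoinDecomposition

variable {α : Type*} [CompleteLattice α]

structure IsJoinDecomposition (S : Set α) (F : α) : Prop where
  le_of_mem : ∀ x ∈ S, x ≤ F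
  iSup_inf_eq_self : ∀ y ≤ F, ⨆ x ∈ S, y ⊓ x = y
  iSup_inf_eq_apply : ∀ h : α → α, (∀ x ∈ S, h x ≤ x) → ∀ x ∈ S, (⨆ z ∈ S, h z) ⊓ x = h x

theorem iSup_ite_eq_bot {ι : Type*} [DecidableEq ι] (f : ι → α) (j : ι) :
    ⨆ i, (if i = j then f i else ⊥) = f j := by
  simp [iSup_ite]

theorem IsJoinDecomposition.of_orderIso {S : Set α} {F : α}
    (φ : (∀ x : S, Iic (x : α)) ≃o Iic F) (hφ : ∀ h, (φ h : α) = ⨆ x, (h x : α)) :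
    IsJoinDecomposition S F := by
  classical
  refine ⟨fun x hx => ?_, fun y hy => ?_, fun h hh x hx => ?_⟩
  · calc x ≤ ⨆ z : S, ((⊤ : ∀ z : S, Iic (z : α)) z : α) := le_iSup_of_le ⟨x, hx⟩ le_rfl
      _ = φ ⊤ := (hφ ⊤).symm
      _ ≤ F := (φ ⊤).2
  · set k := φ.symm ⟨y, hy⟩
    have hk : ⨆ z, (k z : α) = y := by rw [← hφ, φ.apply_symm_apply]
    refine le_antisymm (iSup₂_le fun _ _ => inf_le_left) ?_
    calc y = ⨆ z, (k z : α) := hk.symm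
      _ ≤ ⨆ x ∈ S, y ⊓ x := iSup_le fun z =>
        le_iSup₂_of_le z.1 z.2 (le_inf (hk ▸ le_iSup (fun z => (k z : α)) z) (k z).2)
  · let h' : ∀ z : S, Iic (z : α) := fun z => ⟨h z, hh z z.2⟩
    -- `φ` preserves `⊓`, and meeting with `δ` keeps only the `x`-component.
    let δ : ∀ z : S, Iic (z : α) := fun z => if z = ⟨x, hx⟩ then ⊤ else ⊥
    have hδ : (φ δ : α) = x := by
      rw [hφ]
      refine (iSup_congr fun z => ?_).trans (iSup_ite_eq_bot (fun z : S => (z : α)) ⟨x, hx⟩)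
      by_cases hz : z = ⟨x, hx⟩ <;> simp [δ, hz]
    have hh'δ : (φ (h' ⊓ δ) : α) = h x := by
      rw [hφ]
      refine (iSup_congr fun z => ?_).trans (iSup_ite_eq_bot (fun z : S => h z) ⟨x, hx⟩)
      by_cases hz : z = ⟨x, hx⟩ <;> simp [δ, h', hz]
    have hh' : (φ h' : α) = ⨆ z ∈ S, h z := by rw [hφ, ← iSup_subtype'']
    calc (⨆ z ∈ S, h z) ⊓ x = (φ h' : α) ⊓ φ δ := by rw [hh', hδ]
      _ = φ (h' ⊓ δ) := by rw [φ.map_inf, Iic.coe_inf]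
      _ = h x := hh'δ

theorem IsJoinDecomposition.exists_orderIso {S : Set α} {F : α} (hS : IsJoinDecomposition S F) :
    ∃ φ : (∀ x : S, Iic (x : α)) ≃o Iic F, ∀ h, (φ h : α) = ⨆ x, (h x : α) := by
  classical
  let e : (∀ x : S, Iic (x : α)) ≃ Iic F :=
    { toFun := fun h => ⟨⨆ x, (h x : α), iSup_le fun x => (h x).2.trans (hS.le_of_mem x x.2)⟩
      invFun := fun y x => ⟨y ⊓ x, inf_le_right⟩
      left_inv := fun h => by
        funext x
        apply Subtype.ext
        have := hS.iSup_inf_eq_apply (fun z => if hz : z ∈ S then (h ⟨z, hz⟩ : α) else ⊥)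
          (fun z hz => by rw [dif_pos hz]; exact (h ⟨z, hz⟩).2) x x.2
        simpa [iSup_subtype'] using this
      right_inv := fun y => Subtype.ext <| by
        simpa [iSup_subtype''] using hS.iSup_inf_eq_self y y.2 }
  exact ⟨e.toOrderIso (fun h h' hle => iSup_mono fun x => hle x)
    (fun y y' hle x => inf_le_inf_right _ hle), fun _ => rfl⟩

theorem exists_orderIso_iSup_iff_isJoinDecomposition {S : Set α} {F : α} :
    (∃ φ : (∀ x : S, Iic (x : α)) ≃o Iic F, ∀ h, (φ h : α) = ⨆ x, (h x : α)) ↔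
      IsJoinDecomposition S F :=
  ⟨fun ⟨φ, hφ⟩ => .of_orderIso φ hφ, IsJoinDecomposition.exists_orderIso⟩

end JoinDecomposition

namespace IsJoinDecomposition

variable {α : Type*} [CompleteLattice α] {S B : Set α} {F G : α}

theorem pairwiseDisjoint (hS : IsJoinDecomposition S F) : S.PairwiseDisjoint id := by
  classical
  intro x hx y hy hxy
  have hsup : ⨆ z ∈ S, (if z = x then z else ⊥) = x :=
    le_antisymm (iSup₂_le fun z _ => by split_ifs with h <;> simp [h])
      (le_iSup₂_of_le x hx (by simp))
  have := hS.iSup_inf_eq_apply (fun z => if z = x then z else ⊥)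
    (fun z _ => by split_ifs <;> simp [*]) y hy
  rw [hsup, if_neg hxy.symm] at this
  exact disjoint_iff.mpr this

theorem diff_singleton_union (hS : IsJoinDecomposition S F) (hG : G ∈ S)
    (hB : IsJoinDecomposition B G) : IsJoinDecomposition (S \ {G} ∪ B) F := by
  classical
  have hGF : G ≤ F := hS.le_of_mem G hG
  have hsplit : ∀ f : α → α, ⨆ x ∈ S, f x = f G ⊔ ⨆ x ∈ S \ {G}, f x := fun f => by
    conv_lhs => rw [← insert_sdiff_self_of_mem hG]
    exact iSup_insert
  refine ⟨?_, fun y hy => ?_, fun h hh x hx => ?_⟩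
  · rintro x (hx | hx)
    exacts [hS.le_of_mem x hx.1, (hB.le_of_mem x hx).trans hGF]
  · have hyG : ⨆ x ∈ B, y ⊓ x = y ⊓ G := by
      rw [← hB.iSup_inf_eq_self (y ⊓ G) inf_le_right]
      refine iSup_congr fun x => iSup_congr fun hx => ?_
      rw [inf_assoc, inf_eq_right.mpr (hB.le_of_mem x hx)]
    rw [iSup_union, hyG, sup_comm, ← hsplit, hS.iSup_inf_eq_self y hy]
  · set jB := ⨆ z ∈ B, h z
    have hjB : jB ≤ G := iSup₂_le fun z hz => (hh z (Or.inr hz)).trans (hB.le_of_mem z hz)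
    -- Collapse the `B`-part of `h` into a single value at `G`.
    have hsup : ⨆ z ∈ S \ {G} ∪ B, h z = ⨆ z ∈ S, Function.update h G jB z := by
      rw [hsplit, iSup_union, Function.update_self, sup_comm]
      congr 1
      exact iSup_congr fun z => iSup_congr fun hz => (Function.update_of_ne hz.2 _ _).symm
    have hS' := hS.iSup_inf_eq_apply (Function.update h G jB) (fun z hz => by
      rcases eq_or_ne z G with rfl | hzG
      · simpa using hjB
      · simpa [hzG] using hh z (Or.inl ⟨hz, hzG⟩))
    rw [hsup]
    rcases hx with ⟨hxS, hxG⟩ | hxB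
    · exact (hS' x hxS).trans (Function.update_of_ne hxG _ _)
    · calc (⨆ z ∈ S, Function.update h G jB z) ⊓ x
          = (⨆ z ∈ S, Function.update h G jB z) ⊓ G ⊓ x := by
            rw [inf_assoc, inf_eq_right.mpr (hB.le_of_mem x hxB)]
        _ = jB ⊓ x := by rw [hS' G hG, Function.update_self]
        _ = h x := hB.iSup_inf_eq_apply h (fun z hz => hh z (Or.inr hz)) x hxB

end IsJoinDecomposition

section MaxUnder

variable {α : Type*} [CompleteLattice α] {𝓖 : Set α} {F G : α}

theorem exists_mem_maxUnder_le [Finite α] {K : α} (hK : K ∈ 𝓖) (hKF : K ≤ F) :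
    ∃ H ∈ maxUnder 𝓖 F, K ≤ H := by
  obtain ⟨H, hKH, hH⟩ := (toFinite {G' | G' ∈ 𝓖 ∧ G' ≤ F}).exists_le_maximal ⟨hK, hKF⟩
  exact ⟨H, ⟨hH.1.1, hH.1.2, fun G' hG' hG'F hHG' => (hH.2 ⟨hG', hG'F⟩ hHG').antisymm hHG'⟩, hKH⟩

theorem maxUnder_diff_singleton_of_notMem (hGF : G ∉ maxUnder 𝓖 F) :
    maxUnder (𝓖 \ {G}) F = maxUnder 𝓖 F := by
  ext H
  constructor
  · rintro ⟨⟨hH, hHG⟩, hHF, hmax⟩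
    refine ⟨hH, hHF, fun G' hG' hG'F hHG' => ?_⟩
    rcases eq_or_ne G' G with rfl | hG'G
    · refine absurd ⟨hG', hG'F, fun G'' hG'' hG''F hG'G'' => ?_⟩ hGF
      by_contra hne
      obtain rfl : G'' = H := hmax G'' ⟨hG'', hne⟩ hG''F (hHG'.trans hG'G'')
      exact hHG (hHG'.antisymm hG'G'')
    · exact hmax G' ⟨hG', hG'G⟩ hG'F hHG'
  · rintro ⟨hH, hHF, hmax⟩
    have hHG : H ≠ G := by rintro rfl; exact hGF ⟨hH, hHF, hmax⟩
    exact ⟨⟨hH, hHG⟩, hHF, fun G' hG' => hmax G' hG'.1⟩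

theorem maxUnder_diff_singleton_of_mem [Finite α] (hbot : ∀ K ∈ 𝓖, K ≠ ⊥)
    (hdisj : (maxUnder 𝓖 F).PairwiseDisjoint id) (hGF : G ∈ maxUnder 𝓖 F) :
    maxUnder (𝓖 \ {G}) F = maxUnder 𝓖 F \ {G} ∪ maxUnder (𝓖 \ {G}) G := by
  ext K
  constructor
  · rintro ⟨⟨hK, hKG⟩, hKF, hmax⟩
    obtain ⟨H, hH, hKH⟩ := exists_mem_maxUnder_le hK hKF
    rcases eq_or_ne H G with rfl | hHG
    · exact Or.inr ⟨⟨hK, hKG⟩, hKH, fun G' hG' hG'H => hmax G' hG' (hG'H.trans hH.2.1)⟩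
    · obtain rfl : H = K := hmax H ⟨hH.1, hHG⟩ hH.2.1 hKH
      exact Or.inl ⟨hH, hKG⟩
  · rintro (⟨⟨hK, hKF, hmax⟩, hKG⟩ | ⟨hK, hKG, hmax⟩)
    · exact ⟨⟨hK, hKG⟩, hKF, fun G' hG' => hmax G' hG'.1⟩
    · refine ⟨hK, hKG.trans hGF.2.1, fun G' hG' hG'F hKG' => ?_⟩
      obtain ⟨H, hH, hG'H⟩ := exists_mem_maxUnder_le hG'.1 hG'F
      rcases eq_or_ne H G with rfl | hHG
      · exact hmax G' hG' hG'H hKG'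
      · -- Otherwise `K` would lie below the disjoint maximal elements `H` and `G`.
        exact absurd (le_bot_iff.mp (hdisj hH hGF hHG (hKG'.trans hG'H) hKG)) (hbot K hK.1)

theorem isBuildingSet_iff_isJoinDecomposition :
    IsBuildingSet 𝓖 ↔
      (∀ G ∈ 𝓖, G ≠ ⊥) ∧ ∀ F : α, F ≠ ⊥ → IsJoinDecomposition (maxUnder 𝓖 F) F := by
  simp only [IsBuildingSet, exists_orderIso_iSup_iff_isJoinDecomposition]

end MaxUnder

theorem building_set_remove_iff_general (𝓖 : Set L)
    (h𝓖 : IsBuildingSet 𝓖) (G : L) (hG : G ∈ 𝓖) :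
    IsBuildingSet (𝓖 \ {G}) ↔
      ∃ φ : (∀ H : maxUnder (𝓖 \ {G}) G, Set.Iic (H : L)) ≃o Set.Iic G,
        ∀ h, (φ h : L) = ⨆ H, ((h H : L)) := by
  rw [isBuildingSet_iff_isJoinDecomposition] at h𝓖 ⊢
  rw [exists_orderIso_iSup_iff_isJoinDecomposition]
  obtain ⟨hbot, hdec⟩ := h𝓖
  refine ⟨fun h => h.2 G (hbot G hG), fun hGdec => ⟨fun H hH => hbot H hH.1, fun F hF => ?_⟩⟩
  by_cases hGF : G ∈ maxUnder 𝓖 F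
  · rw [maxUnder_diff_singleton_of_mem hbot (hdec F hF).pairwiseDisjoint hGF]
    exact (hdec F hF).diff_singleton_union hGF hGdec
  · rw [maxUnder_diff_singleton_of_notMem hGF]
    exact hdec F hF

/-- for `G ∈ 𝓖`, the set `𝓖 \ {G}` is a building set if and
only if the join map gives a poset isomorphism from the product of the
intervals `[⊥, F]`, `F` ranging over the maximal elements of `𝓖 \ {G}` below
`G`, onto the interval `[⊥, G]`. -/
theorem building_set_remove_iff (hL : IsGeometricLattice L) (𝓖 : Set L)
    (h𝓖 : IsBuildingSet 𝓖) (G : L) (hG : G ∈ 𝓖) :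
    IsBuildingSet (𝓖 \ {G}) ↔
      ∃ φ : (∀ H : maxUnder (𝓖 \ {G}) G, Set.Iic (H : L)) ≃o Set.Iic G,
        ∀ h, (φ h : L) = ⨆ H, ((h H : L)) :=
  building_set_remove_iff_general 𝓖 h𝓖 G hG
end

section
/- Let L be a finite geometric lattice. A subset 𝓖 ⊆ L \ {0̂} is a building set if and only if (a) 𝓖 contains every irreducible element of L \ {0̂}, and (b) for all G, G' ∈ 𝓖 with G ∧ G' ≠ 0̂, one has G ∨ G' ∈ 𝓖. -/
/-!
Call a family `C i ≤ F` a join decomposition of `F` when the join map `∏ [⊥, C i] → [⊥, F]` is an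
order isomorphism. Such decompositions can be coarsened (join the blocks of a partition of the
index set) and refined (decompose each piece).

If `𝓖` is a building set and `F` is irreducible, the maximal elements of `𝓖` below `F` decompose
`F`, so one of them is `F`; if `G ⊓ G' ≠ ⊥`, the maximal elements above `G` and `G'` below `G ⊔ G'`
meet nontrivially, hence coincide, hence equal `G ⊔ G'`. Conversely, by induction every `F ≠ ⊥` has
a join decomposition by elements of `𝓖`: an irreducible `F` lies in `𝓖`, and a reducible one
splits into two smaller pieces. Closure under intersecting joins puts each piece below a unique
maximal element of `𝓖_{≤ F}`, and grouping the pieces accordingly gives the decomposition by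
`max 𝓖_{≤ F}`.
-/

variable {L : Type*} [CompleteLattice L] [Fintype L]

/-- An element `F ≠ ⊥` of a lattice is *irreducible* if the interval `[⊥, F]`
admits only trivial direct product decompositions: there is no pair of nonzero
elements `G, H` with `G ⊔ H = F` such that the join map gives an order
isomorphism `[⊥, G] × [⊥, H] ≅ [⊥, F]`. -/
def IsIrred (F : L) : Prop :=
  F ≠ ⊥ ∧ ¬ ∃ G H : L, G ≠ ⊥ ∧ H ≠ ⊥ ∧ G ⊔ H = F ∧
    ∃ φ : (Set.Iic G × Set.Iic H) ≃o Set.Iic F,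
      ∀ p, (φ p : L) = (p.1 : L) ⊔ (p.2 : L)

section JoinDecomposition

variable {α ι κ : Type*} [CompleteLattice α] {C : ι → α} {F x : α}

/-- The join map `∏ i, [⊥, C i] → [⊥, F]` is an order isomorphism, phrased in lattice terms: its
inverse is `x ↦ (x ⊓ C i)ᵢ` (see `isJoinDecomp_iff_exists_orderIso`). -/
structure IsJoinDecomp (C : ι → α) (F : α) : Prop where
  le : ∀ i, C i ≤ F
  iSup_inf : ∀ x ≤ F, ⨆ i, x ⊓ C i = x
  iSup_inf_of_le : ∀ h : ι → α, (∀ i, h i ≤ C i) → ∀ j, (⨆ i, h i) ⊓ C j = h j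

namespace IsJoinDecomp

theorem iSup_eq (hC : IsJoinDecomp C F) : ⨆ i, C i = F := by
  simpa only [inf_eq_right.mpr (hC.le _)] using hC.iSup_inf F le_rfl

theorem biSup_inf_eq_bot (hC : IsJoinDecomp C F) {p : ι → Prop} {j : ι} (hj : ¬ p j) :
    (⨆ (i) (_ : p i), C i) ⊓ C j = ⊥ := by
  classical
  have := hC.iSup_inf_of_le (fun i => if p i then C i else ⊥)
    (fun i => by split_ifs <;> simp) j
  simpa only [← iSup_eq_if, if_neg hj] using this

theorem inf_eq_bot (hC : IsJoinDecomp C F) {i j : ι} (hij : i ≠ j) : C i ⊓ C j = ⊥ := by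
  simpa only [iSup_iSup_eq_left] using hC.biSup_inf_eq_bot (p := (· = i)) hij.symm

theorem lt_of_ne_bot (hC : IsJoinDecomp C F) {i j : ι} (hij : i ≠ j) (hj : C j ≠ ⊥) : C i < F := by
  refine (hC.le i).lt_of_ne fun hiF => hj ?_
  simpa [hiF, inf_eq_right.mpr (hC.le j)] using hC.inf_eq_bot hij

theorem biSup_inf_of_le (hC : IsJoinDecomp C F) {p : ι → Prop}
    (hx : x ≤ ⨆ (i) (_ : p i), C i) : ⨆ (i) (_ : p i), x ⊓ C i = x := by
  refine le_antisymm (iSup₂_le fun _ _ => inf_le_left) ?_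
  conv_lhs => rw [← hC.iSup_inf x (hx.trans (iSup₂_le fun i _ => hC.le i))]
  refine iSup_le fun i => ?_
  by_cases hi : p i
  · exact le_biSup (fun i => x ⊓ C i) hi
  · exact (inf_le_inf_right _ hx).trans (hC.biSup_inf_eq_bot hi).le |>.trans bot_le

theorem coarsen (hC : IsJoinDecomp C F) (σ : ι → κ) :
    IsJoinDecomp (fun k => ⨆ (i) (_ : σ i = k), C i) F where
  le k := iSup₂_le fun i _ => hC.le i
  iSup_inf x hx := by
    refine le_antisymm (iSup_le fun _ => inf_le_left) ?_
    conv_lhs => rw [← hC.iSup_inf x hx]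
    exact iSup_le fun i => le_iSup_of_le (σ i)
      (inf_le_inf_left x (le_biSup (fun i => C i) rfl))
  iSup_inf_of_le h hh k := by
    have hsplit k : ⨆ (i) (_ : σ i = k), h k ⊓ C i = h k := hC.biSup_inf_of_le (hh k)
    have hg i : h (σ i) ⊓ C i ≤ C i := inf_le_right
    have hsup : ⨆ k, h k = ⨆ i, h (σ i) ⊓ C i := calc
      ⨆ k, h k = ⨆ k, ⨆ i, ⨆ (_ : σ i = k), h k ⊓ C i := iSup_congr fun k => (hsplit k).symm
      _ = ⨆ i, ⨆ k, ⨆ (_ : σ i = k), h k ⊓ C i := iSup_comm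
      _ = ⨆ i, h (σ i) ⊓ C i := by simp only [iSup_iSup_eq_right]
    refine le_antisymm ?_ (le_inf (le_iSup h k) (hh k))
    calc (⨆ k, h k) ⊓ ⨆ (i) (_ : σ i = k), C i
        = ⨆ (i) (_ : σ i = k), (⨆ k, h k) ⊓ (⨆ (i) (_ : σ i = k), C i) ⊓ C i :=
          (hC.biSup_inf_of_le inf_le_right).symm
      _ ≤ ⨆ (i) (_ : σ i = k), (⨆ k, h k) ⊓ C i :=
          iSup₂_mono fun _ _ => inf_le_inf_right _ inf_le_left
      _ = ⨆ (i) (_ : σ i = k), h k ⊓ C i := by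
          refine iSup_congr fun i => iSup_congr fun hi => ?_
          rw [hsup, hC.iSup_inf_of_le _ hg, hi]
      _ = h k := hsplit k

theorem sigma {η : κ → Type*} {D : κ → α} {C : (k : κ) → η k → α} (hD : IsJoinDecomp D F)
    (hC : ∀ k, IsJoinDecomp (C k) (D k)) : IsJoinDecomp (fun p : Σ k, η k => C p.1 p.2) F where
  le p := ((hC p.1).le p.2).trans (hD.le p.1)
  iSup_inf x hx := calc
    ⨆ p : Σ k, η k, x ⊓ C p.1 p.2 = ⨆ k, ⨆ j, x ⊓ D k ⊓ C k j := by
      simp only [iSup_sigma, inf_assoc, inf_eq_right.mpr ((hC _).le _)]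
    _ = ⨆ k, x ⊓ D k := iSup_congr fun k => (hC k).iSup_inf _ inf_le_right
    _ = x := hD.iSup_inf x hx
  iSup_inf_of_le h hh := by
    rintro ⟨k, j⟩
    have hblock k : ⨆ j, h ⟨k, j⟩ ≤ D k := iSup_le fun j => (hh _).trans ((hC k).le j)
    calc (⨆ p, h p) ⊓ C k j = (⨆ k, ⨆ j, h ⟨k, j⟩) ⊓ D k ⊓ C k j := by
          rw [iSup_sigma, inf_assoc, inf_eq_right.mpr ((hC k).le j)]
      _ = (⨆ j, h ⟨k, j⟩) ⊓ C k j := by rw [hD.iSup_inf_of_le _ hblock]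
      _ = h ⟨k, j⟩ := (hC k).iSup_inf_of_le (fun j => h ⟨k, j⟩) (fun _ => hh _) j

theorem pair [DecidableEq ι] (hC : IsJoinDecomp C F) (i₀ : ι) :
    IsJoinDecomp ![C i₀, ⨆ (i) (_ : i ≠ i₀), C i] F := by
  convert hC.coarsen (fun i => if i = i₀ then (0 : Fin 2) else 1) using 1
  funext k
  fin_cases k <;> simp

theorem of_orderIso (Φ : ((i : ι) → Set.Iic (C i)) ≃o Set.Iic F)
    (hΦ : ∀ h, (Φ h : α) = ⨆ i, (h i : α)) : IsJoinDecomp C F := by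
  classical
  have hsurj (x : α) (hx : x ≤ F) : ∃ g : (i : ι) → Set.Iic (C i), x = ⨆ i, (g i : α) :=
    ⟨Φ.symm ⟨x, hx⟩, by rw [← hΦ, Φ.apply_symm_apply]⟩
  have hrefl {g g' : (i : ι) → Set.Iic (C i)} (hle : ⨆ i, (g i : α) ≤ ⨆ i, (g' i : α)) :
      g ≤ g' := by
    rw [← hΦ, ← hΦ] at hle
    exact Φ.le_iff_le.mp hle
  let e (i : ι) : (j : ι) → Set.Iic (C j) := Function.update ⊥ i ⊤
  have he_self (i : ι) : (e i i : α) = C i := by simp [e]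
  have he_ne {i j : ι} (hji : j ≠ i) : (e i j : α) = ⊥ := by simp [e, hji]
  have he (i : ι) : ⨆ j, (e i j : α) = C i := by
    refine le_antisymm (iSup_le fun j => ?_)
      ((he_self i).ge.trans (le_iSup (fun j => (e i j : α)) i))
    rcases eq_or_ne j i with rfl | hji
    · exact (he_self j).le
    · exact (he_ne hji).trans_le bot_le
  have hle i : C i ≤ F := he i ▸ hΦ (e i) ▸ (Φ (e i)).2
  have key (h : ι → α) (hh : ∀ i, h i ≤ C i) (j : ι) : (⨆ i, h i) ⊓ C j = h j := by
    refine le_antisymm ?_ (le_inf (le_iSup h j) (hh j))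
    -- the preimage `g` of `(⨆ h) ⊓ C j` lies below both `h` and `e j`, so it vanishes off `j`
    obtain ⟨g, hg⟩ := hsurj _ (inf_le_right.trans (hle j))
    have hgh : g ≤ fun i => ⟨h i, hh i⟩ := hrefl (hg ▸ inf_le_left)
    have hge : g ≤ e j := hrefl (hg ▸ he j ▸ inf_le_right)
    rw [hg]
    refine iSup_le fun i => ?_
    rcases eq_or_ne i j with rfl | hij
    · exact hgh i
    · exact (Subtype.coe_le_coe.mpr (hge i)).trans ((he_ne hij).trans_le bot_le)
  refine ⟨hle, fun x hx => ?_, key⟩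
  obtain ⟨g, rfl⟩ := hsurj x hx
  exact iSup_congr fun i => key _ (fun i => (g i).2) i

end IsJoinDecomp

theorem isJoinDecomp_const (F : α) : IsJoinDecomp (fun _ : Unit => F) F where
  le _ := le_rfl
  iSup_inf x hx := by simpa using hx
  iSup_inf_of_le h hh _ := by simpa using hh ()

theorem iSup_fin_two (f : Fin 2 → α) : ⨆ i, f i = f 0 ⊔ f 1 :=
  le_antisymm (iSup_le fun i => by fin_cases i <;> simp) (sup_le (le_iSup f 0) (le_iSup f 1))

theorem isJoinDecomp_iff_exists_orderIso : IsJoinDecomp C F ↔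
    ∃ Φ : ((i : ι) → Set.Iic (C i)) ≃o Set.Iic F, ∀ h, (Φ h : α) = ⨆ i, (h i : α) := by
  refine ⟨fun hC => ?_, fun ⟨Φ, hΦ⟩ => .of_orderIso Φ hΦ⟩
  let e : ((i : ι) → Set.Iic (C i)) ≃ Set.Iic F :=
    { toFun h := ⟨⨆ i, h i, iSup_le fun i => (h i).2.trans (hC.le i)⟩
      invFun x i := ⟨x ⊓ C i, inf_le_right⟩
      left_inv h := funext fun i => Subtype.ext (hC.iSup_inf_of_le _ (fun i => (h i).2) i)
      right_inv x := Subtype.ext (hC.iSup_inf x x.2) }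
  exact ⟨e.toOrderIso (fun h h' hle => iSup_mono hle) (fun x y hle i => inf_le_inf_right _ hle),
    fun _ => rfl⟩

theorem isJoinDecomp_pair_iff {G H : α} : IsJoinDecomp ![G, H] F ↔
    ∃ φ : (Set.Iic G × Set.Iic H) ≃o Set.Iic F, ∀ p, (φ p : α) = (p.1 : α) ⊔ (p.2 : α) := by
  rw [isJoinDecomp_iff_exists_orderIso]
  constructor
  · rintro ⟨Φ, hΦ⟩
    exact ⟨(OrderIso.piFinTwoIso _).symm.trans Φ, fun p => (hΦ _).trans (iSup_fin_two _)⟩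
  · rintro ⟨φ, hφ⟩
    exact ⟨(OrderIso.piFinTwoIso _).trans φ,
      fun h => (hφ _).trans (iSup_fin_two fun i => (h i : α)).symm⟩

end JoinDecomposition

section BuildingSet

variable {α ι : Type*} [CompleteLattice α] {𝓖 : Set α} {F G G' M : α}

theorem isBuildingSet_iff : IsBuildingSet 𝓖 ↔ (∀ G ∈ 𝓖, G ≠ ⊥) ∧
    ∀ F : α, F ≠ ⊥ → IsJoinDecomp (fun M : maxUnder 𝓖 F => (M : α)) F := by
  simp only [IsBuildingSet, isJoinDecomp_iff_exists_orderIso]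

theorem isIrred_iff : IsIrred F ↔ F ≠ ⊥ ∧ ∀ G H : α, IsJoinDecomp ![G, H] F → G = ⊥ ∨ H = ⊥ := by
  refine and_congr_right fun _ => ⟨fun h G H hGH => ?_, ?_⟩
  · by_contra! hne
    exact h ⟨G, H, hne.1, hne.2, (iSup_fin_two _).symm.trans hGH.iSup_eq,
      isJoinDecomp_pair_iff.mp hGH⟩
  · rintro h ⟨G, H, hG, hH, -, hGH⟩
    exact (h G H (isJoinDecomp_pair_iff.mpr hGH)).elim hG hH

theorem IsIrred.exists_eq {C : ι → α} (hF : IsIrred F) (hC : IsJoinDecomp C F) : ∃ i, C i = F := by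
  classical
  obtain ⟨hF0, hsplit⟩ := isIrred_iff.mp hF
  obtain ⟨i₀, hi₀⟩ : ∃ i, C i ≠ ⊥ := by
    by_contra! h
    exact hF0 (by simp [← hC.iSup_eq, h])
  have hpair := hC.pair i₀
  have hrest : ⨆ (i) (_ : i ≠ i₀), C i = ⊥ := (hsplit _ _ hpair).resolve_left hi₀
  exact ⟨i₀, by simpa [hrest] using (iSup_fin_two _).symm.trans hpair.iSup_eq⟩

theorem exists_mem_maxUnder_le_s12 [Finite α] (hG : G ∈ 𝓖) (hGF : G ≤ F) :
    ∃ M ∈ maxUnder 𝓖 F, G ≤ M := by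
  obtain ⟨M, hGM, hM⟩ := Finite.exists_le_maximal (p := fun M => M ∈ 𝓖 ∧ M ≤ F) ⟨hG, hGF⟩
  exact ⟨M, ⟨hM.prop.1, hM.prop.2, fun G' hG' hG'F hMG' => (hM.2 ⟨hG', hG'F⟩ hMG').antisymm hMG'⟩,
    hGM⟩

theorem sup_mem_of_isJoinDecomp_maxUnder [Finite α]
    (hdecomp : ∀ F : α, F ≠ ⊥ → IsJoinDecomp (fun M : maxUnder 𝓖 F => (M : α)) F)
    (hG : G ∈ 𝓖) (hG' : G' ∈ 𝓖) (hGG' : G ⊓ G' ≠ ⊥) : G ⊔ G' ∈ 𝓖 := by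
  obtain ⟨M, hM, hGM⟩ := exists_mem_maxUnder_le_s12 hG (le_sup_left (b := G'))
  obtain ⟨M', hM', hG'M'⟩ := exists_mem_maxUnder_le_s12 hG' (le_sup_right (a := G))
  obtain rfl : M = M' := by
    by_contra hne
    have hdisj := (hdecomp _ (ne_bot_of_le_ne_bot hGG' (inf_le_left.trans le_sup_left))).inf_eq_bot
      (i := ⟨M, hM⟩) (j := ⟨M', hM'⟩) (by simpa using hne)
    exact hGG' (eq_bot_mono (inf_le_inf hGM hG'M') hdisj)
  exact (le_antisymm hM.2.1 (sup_le hGM hG'M')) ▸ hM.1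

section Closure

variable (hsup : ∀ G ∈ 𝓖, ∀ G' ∈ 𝓖, G ⊓ G' ≠ ⊥ → G ⊔ G' ∈ 𝓖)
include hsup

theorem sup_eq_of_mem_maxUnder (hM : M ∈ maxUnder 𝓖 F) (hG : G ∈ 𝓖) (hGF : G ≤ F)
    (hMG : M ⊓ G ≠ ⊥) : M ⊔ G = M :=
  hM.2.2 _ (hsup M hM.1 G hG hMG) (sup_le hM.2.1 hGF) le_sup_left

theorem eq_of_mem_maxUnder (hM : M ∈ maxUnder 𝓖 F) (hM' : G ∈ maxUnder 𝓖 F) (hMG : M ⊓ G ≠ ⊥) :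
    M = G :=
  (sup_eq_of_mem_maxUnder hsup hM hM'.1 hM'.2.1 hMG).symm.trans <| sup_comm M G ▸
    sup_eq_of_mem_maxUnder hsup hM' hM.1 hM.2.1 (inf_comm M G ▸ hMG)

theorem isJoinDecomp_maxUnder_of_isJoinDecomp [Finite α] {K : ι → α} (hK : IsJoinDecomp K F)
    (hK𝓖 : ∀ i, K i ∈ 𝓖) : IsJoinDecomp (fun M : maxUnder 𝓖 F => (M : α)) F := by
  choose σ hσ hKσ using fun i => exists_mem_maxUnder_le_s12 (hK𝓖 i) (hK.le i)
  convert hK.coarsen (fun i => (⟨σ i, hσ i⟩ : maxUnder 𝓖 F)) using 1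
  funext M
  refine le_antisymm ?_ (iSup₂_le fun i hi => hi ▸ hKσ i)
  conv_lhs => rw [← hK.iSup_inf M M.2.2.1]
  refine iSup_le fun i => ?_
  by_cases hMK : (M : α) ⊓ K i = ⊥
  · exact hMK ▸ bot_le
  have hKM : K i ≤ M :=
    le_sup_right.trans_eq (sup_eq_of_mem_maxUnder hsup M.2 (hK𝓖 i) (hK.le i) hMK)
  have hσM : (⟨σ i, hσ i⟩ : maxUnder 𝓖 F) = M := Subtype.ext <| eq_of_mem_maxUnder hsup (hσ i) M.2
    (ne_bot_of_le_ne_bot (ne_bot_of_le_ne_bot hMK inf_le_right) (le_inf (hKσ i) hKM))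
  exact inf_le_right.trans (le_biSup K hσM)

theorem isJoinDecomp_maxUnder [Finite α] (hirr : ∀ F : α, IsIrred F → F ∈ 𝓖) (F : α) (hF : F ≠ ⊥) :
    IsJoinDecomp (fun M : maxUnder 𝓖 F => (M : α)) F := by
  induction F using WellFoundedLT.induction with | ind F ih
  by_cases hFirr : IsIrred F
  · exact isJoinDecomp_maxUnder_of_isJoinDecomp hsup (isJoinDecomp_const F) fun _ => hirr F hFirr
  obtain ⟨G, H, hGH, hG, hH⟩ : ∃ G H : α, IsJoinDecomp ![G, H] F ∧ G ≠ ⊥ ∧ H ≠ ⊥ := by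
    simpa [isIrred_iff, hF, not_or] using hFirr
  have hne : ∀ k, ![G, H] k ≠ ⊥ := Fin.forall_fin_two.mpr ⟨hG, hH⟩
  have hlt : ∀ k, ![G, H] k < F := Fin.forall_fin_two.mpr
    ⟨hGH.lt_of_ne_bot (j := 1) (by decide) hH, hGH.lt_of_ne_bot (j := 0) (by decide) hG⟩
  exact isJoinDecomp_maxUnder_of_isJoinDecomp hsup
    (hGH.sigma fun k => ih _ (hlt k) (hne k)) fun p => p.2.2.1

end Closure

end BuildingSet

theorem building_set_char_general (𝓖 : Set L) :
    IsBuildingSet 𝓖 ↔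
      ((∀ G ∈ 𝓖, G ≠ ⊥) ∧ (∀ F : L, IsIrred F → F ∈ 𝓖) ∧
        ∀ G ∈ 𝓖, ∀ G' ∈ 𝓖, G ⊓ G' ≠ ⊥ → G ⊔ G' ∈ 𝓖) := by
  rw [isBuildingSet_iff]
  constructor
  · rintro ⟨h0, hdecomp⟩
    exact ⟨h0, fun F hF => (hF.exists_eq (hdecomp F hF.1)).elim fun M hM => hM ▸ M.2.1,
      fun G hG G' hG' => sup_mem_of_isJoinDecomp_maxUnder hdecomp hG hG'⟩
  · rintro ⟨h0, hirr, hsup⟩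
    exact ⟨h0, isJoinDecomp_maxUnder hsup hirr⟩

/-- a subset `𝓖 ⊆ L \ {⊥}` of a finite geometric lattice is a
building set if and only if it contains every irreducible element and is
closed under joins of pairs with nonzero meet. -/
theorem building_set_char (hL : IsGeometricLattice L) (𝓖 : Set L) :
    IsBuildingSet 𝓖 ↔
      ((∀ G ∈ 𝓖, G ≠ ⊥) ∧ (∀ F : L, IsIrred F → F ∈ 𝓖) ∧
        ∀ G ∈ 𝓖, ∀ G' ∈ 𝓖, G ⊓ G' ≠ ⊥ → G ⊔ G' ∈ 𝓖) :=
  building_set_char_general 𝓖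
end

section
/- Let g = (g_0, g_1, g_2) be a sequence of nonnegative integers with g_0 = 1 that is the f-vector of a pure 1-dimensional simplicial complex (i.e., g_2 ≥ 1 implies every vertex is in an edge, and g_2 ≤ C(g_1, 2)). Then the polynomial h(t) = (1 + g_1 t + g_2 t²)(1 + t + t²) has log-concave coefficients. -/
open Polynomial

lemma pure_g_aux (g₁ g₂ : ℕ) (hle : g₂ ≤ g₁.choose 2) : 2 * g₂ ≤ g₁ * g₁ := by
  have h1 : g₁.choose 2 = g₁ * (g₁ - 1) / 2 := Nat.choose_two_right g₁
  have h2 : g₁ * (g₁ - 1) / 2 ≤ g₁ * g₁ / 2 :=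
    Nat.div_le_div_right (Nat.mul_le_mul_left _ (Nat.sub_le _ _))
  have h3 : g₁ * (g₁ - 1) / 2 * 2 ≤ g₁ * (g₁ - 1) := Nat.div_mul_le_self _ _
  have h4 : g₁ * (g₁ - 1) ≤ g₁ * g₁ := Nat.mul_le_mul_left _ (Nat.sub_le _ _)
  omega

/-- if `(1, g₁, g₂)` is the f-vector of a pure 1-dimensional
simplicial complex (a graph with `g₁` vertices and `g₂` edges such that if
`g₂ ≥ 1` then every vertex lies in an edge), then the polynomial
`h(t) = (1 + g₁ t + g₂ t²)(1 + t + t²)` has log-concave coefficients. -/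
theorem pure_g_vector_log_concave (g₁ g₂ : ℕ) {V : Type*} [Fintype V]
    (G : SimpleGraph V) [DecidableRel G.Adj]
    (hcard : Fintype.card V = g₁) (hedges : G.edgeFinset.card = g₂)
    (hpure : 1 ≤ g₂ → ∀ v : V, ∃ w, G.Adj v w) :
    ∀ i : ℕ, 0 < i →
      ((1 + C ((g₁ : ℝ)) * X + C ((g₂ : ℝ)) * X ^ 2) *
        (1 + X + X ^ 2)).coeff (i - 1) *
      ((1 + C ((g₁ : ℝ)) * X + C ((g₂ : ℝ)) * X ^ 2) *
        (1 + X + X ^ 2)).coeff (i + 1) ≤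
      ((1 + C ((g₁ : ℝ)) * X + C ((g₂ : ℝ)) * X ^ 2) *
        (1 + X + X ^ 2)).coeff i ^ 2 := by
  -- edge bound
  have hchoose : g₂ ≤ g₁.choose 2 := by
    rw [← hedges, ← hcard]
    exact G.card_edgeFinset_le_card_choose_two
  have hsq : 2 * g₂ ≤ g₁ * g₁ := pure_g_aux g₁ g₂ hchoose
  have hpos : 1 ≤ g₂ → 1 ≤ g₁ := by
    intro h
    by_contra hc
    push_neg at hc
    interval_cases g₁ <;> omega
  set a : ℝ := (g₁ : ℝ) with ha
  set b : ℝ := (g₂ : ℝ) with hb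
  have ha0 : (0:ℝ) ≤ a := Nat.cast_nonneg _
  have hb0 : (0:ℝ) ≤ b := Nat.cast_nonneg _
  have hsq' : 2 * b ≤ a * a := by
    rw [ha, hb]
    exact_mod_cast hsq
  set P : ℝ[X] := (1 + C a * X + C b * X ^ 2) * (1 + X + X ^ 2) with hPdef
  have hP : P = C 1 + C (a + 1) * X + C (a + b + 1) * X ^ 2 + C (a + b) * X ^ 3
      + C b * X ^ 4 := by
    simp only [hPdef, map_add, C_1]
    ring
  have c0 : P.coeff 0 = 1 := by rw [hP]; simp [coeff_one, coeff_C_mul, coeff_X_pow, coeff_X, coeff_C, coeff_mul_X_pow']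
  have c1 : P.coeff 1 = a + 1 := by rw [hP]; simp [coeff_one, coeff_C_mul, coeff_X_pow, coeff_X, coeff_C, coeff_mul_X_pow']
  have c2 : P.coeff 2 = a + b + 1 := by rw [hP]; simp [coeff_one, coeff_C_mul, coeff_X_pow, coeff_X, coeff_C, coeff_mul_X_pow']
  have c3 : P.coeff 3 = a + b := by rw [hP]; simp [coeff_one, coeff_C_mul, coeff_X_pow, coeff_X, coeff_C, coeff_mul_X_pow']
  have c4 : P.coeff 4 = b := by rw [hP]; simp [coeff_one, coeff_C_mul, coeff_X_pow, coeff_X, coeff_C, coeff_mul_X_pow']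
  have cdeg : P.natDegree ≤ 4 := by
    rw [hP]
    compute_degree
  intro i hi
  match i, hi with
  | 1, _ => rw [c0, c1, c2]; nlinarith
  | 2, _ => rw [c1, c2, c3]; nlinarith
  | 3, _ => rw [c2, c3, c4]
            rcases Nat.eq_zero_or_pos g₂ with h | h
            · have : b = 0 := by rw [hb]; exact_mod_cast h
              rw [this]; nlinarith
            · have h1 : (1:ℝ) ≤ a := by
                rw [ha]; exact_mod_cast hpos h
              have h2 : (1:ℝ) ≤ b := by rw [hb]; exact_mod_cast h
              nlinarith
  | (n+4), _ =>
      have hz : P.coeff (n + 4 + 1) = 0 :=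
        coeff_eq_zero_of_natDegree_lt (lt_of_le_of_lt cdeg (by omega))
      rw [hz, mul_zero]
      positivity
end

section
/- Let L be a geometric lattice with building set 𝓖, and suppose 𝓖 ⊆ 𝓖' are two building sets of L. Then there exists a chain of building sets 𝓖 = 𝓖_p ⊂ 𝓖_{p−1} ⊂ ⋯ ⊂ 𝓖_0 = 𝓖' such that each consecutive containment adds exactly one element. -/
/-!
Let `G` be a minimal element of `𝓖' \ 𝓖`. Removing `G` from `𝓖'` only changes the maximal
elements below those `F` for which `G` itself is maximal, and there `G` is replaced by the
maximal elements of `𝓖` below `G`: by minimality, these are also the maximal elements of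
`𝓖' \ {G}` below `G`, and they are disjoint from the other maximal elements of `𝓖'` below `F`.
The building-set isomorphism of `𝓖` at `G` identifies their product of intervals with the
single factor `[⊥, G]`, so `𝓖' \ {G}` is again a building set. Removing minimal elements one
at a time produces the chain.
-/

variable {L : Type*} [CompleteLattice L] [Fintype L]

open Set

theorem Set.exists_insert_chain {α : Type*} {P : Set α → Prop} {s t : Set α} (hst : s ⊆ t)
    (hfin : (t \ s).Finite) (ht : P t)
    (step : ∀ u, s ⊂ u → P u → ∃ a ∈ u \ s, P (u \ {a})) :
    ∃ (p : ℕ) (c : ℕ → Set α), c p = s ∧ c 0 = t ∧ (∀ i ≤ p, P (c i)) ∧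
      ∀ i < p, ∃ a, a ∉ c (i + 1) ∧ c i = insert a (c (i + 1)) := by
  induction hn : (t \ s).ncard generalizing t with
  | zero =>
    obtain rfl : t = s := hst.antisymm' (sdiff_eq_empty.mp ((ncard_eq_zero hfin).mp hn))
    exact ⟨0, fun _ => t, rfl, rfl, fun _ _ => ht, fun _ h => absurd h (Nat.not_lt_zero _)⟩
  | succ n ih =>
    have hss : s ⊂ t := hst.ssubset_of_ne (by rintro rfl; simp at hn)
    obtain ⟨a, ha, hPa⟩ := step t hss ht
    have hn' : ((t \ {a}) \ s).ncard = n := by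
      rw [sdiff_sdiff_comm, ncard_sdiff_singleton_of_mem ha, hn, Nat.add_sub_cancel]
    have hfin' : ((t \ {a}) \ s).Finite := hfin.subset (sdiff_subset_sdiff_left sdiff_subset)
    obtain ⟨p, c, hcp, hc0, hcP, hcins⟩ := ih (subset_sdiff_singleton hst ha.2) hfin' hPa hn'
    refine ⟨p + 1, fun | 0 => t | i + 1 => c i, hcp, rfl, ?_, ?_⟩
    · rintro (_ | i) hi
      exacts [ht, hcP i (by omega)]
    · rintro (_ | i) hi
      · exact ⟨a, by simp [hc0], by simp [hc0, insert_eq_of_mem ha.1]⟩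
      · exact hcins i (by omega)

section Refine

variable {α : Type*} [CompleteLattice α] {S T U : Set α} {G : α}
  (φ : (∀ u : U, Iic (u : α)) ≃o Iic G)

section
variable (hUS : U ⊆ S) (hTS : T \ {G} ⊆ S)

open Classical in
noncomputable def piIicGlue (h : ∀ s : S, Iic (s : α)) (t : T) : Iic (t : α) :=
  if ht : (t : α) = G then ⟨φ fun u => h ⟨u, hUS u.2⟩, (φ _).2.trans ht.ge⟩
  else h ⟨t, hTS ⟨t.2, ht⟩⟩

theorem piIicGlue_self (hG : G ∈ T) (h : ∀ s : S, Iic (s : α)) :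
    piIicGlue φ hUS hTS h ⟨G, hG⟩ = φ fun u => h ⟨u, hUS u.2⟩ :=
  dif_pos rfl

theorem piIicGlue_of_ne (h : ∀ s : S, Iic (s : α)) {t : T} (ht : (t : α) ≠ G) :
    piIicGlue φ hUS hTS h t = h ⟨t, hTS ⟨t.2, ht⟩⟩ :=
  dif_neg ht

theorem monotone_piIicGlue : Monotone (piIicGlue φ hUS hTS) := fun h h' hh t => by
  by_cases ht : (t : α) = G
  · obtain ⟨t, hG⟩ := t
    obtain rfl : t = G := ht
    rw [piIicGlue_self, piIicGlue_self]
    exact φ.monotone fun u => hh _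
  · rw [piIicGlue_of_ne φ hUS hTS h ht, piIicGlue_of_ne φ hUS hTS h' ht]
    exact hh _

end

section
variable (hG : G ∈ T) (hS : S ⊆ U ∪ T)

open Classical in
noncomputable def piIicSplit (k : ∀ t : T, Iic (t : α)) (s : S) : Iic (s : α) :=
  if hs : (s : α) ∈ U then φ.symm (k ⟨G, hG⟩) ⟨s, hs⟩
  else k ⟨s, (hS s.2).resolve_left hs⟩

theorem piIicSplit_of_mem (k : ∀ t : T, Iic (t : α)) {s : S} (hs : (s : α) ∈ U) :
    piIicSplit φ hG hS k s = φ.symm (k ⟨G, hG⟩) ⟨s, hs⟩ :=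
  dif_pos hs

theorem piIicSplit_of_notMem (k : ∀ t : T, Iic (t : α)) {s : S} (hs : (s : α) ∉ U) :
    piIicSplit φ hG hS k s = k ⟨s, (hS s.2).resolve_left hs⟩ :=
  dif_neg hs

theorem monotone_piIicSplit : Monotone (piIicSplit φ hG hS) := fun k k' hk s => by
  by_cases hs : (s : α) ∈ U
  · rw [piIicSplit_of_mem φ hG hS k hs, piIicSplit_of_mem φ hG hS k' hs]
    exact φ.symm.monotone (hk _) _
  · rw [piIicSplit_of_notMem φ hG hS k hs, piIicSplit_of_notMem φ hG hS k' hs]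
    exact hk _

end

variable (hG : G ∈ T) (hGS : G ∉ S) (hUS : U ⊆ S) (hTS : T \ {G} ⊆ S) (hS : S ⊆ U ∪ T)
  (hUT : Disjoint U T)

-- The product over `S`, which is `U` together with `T \ {G}`, is the product over `T` with the
-- factor `[⊥, G]` expanded into the product over `U` through `φ`.
noncomputable def piIicRefine : (∀ s : S, Iic (s : α)) ≃o (∀ t : T, Iic (t : α)) :=
  OrderIso.ofHomInv ⟨_, monotone_piIicGlue φ hUS hTS⟩ ⟨_, monotone_piIicSplit φ hG hS⟩
    (OrderHom.ext _ _ <| funext fun k => funext fun t => by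
      change piIicGlue φ hUS hTS (piIicSplit φ hG hS k) t = k t
      by_cases ht : (t : α) = G
      · obtain rfl : t = ⟨G, hG⟩ := Subtype.ext ht
        have : (fun u : U => piIicSplit φ hG hS k ⟨u, hUS u.2⟩) = φ.symm (k ⟨G, hG⟩) :=
          funext fun u => piIicSplit_of_mem φ hG hS k u.2
        rw [piIicGlue_self, this, φ.apply_symm_apply]
      · rw [piIicGlue_of_ne φ hUS hTS _ ht,
          piIicSplit_of_notMem φ hG hS k (hUT.notMem_of_mem_right t.2)])
    (OrderHom.ext _ _ <| funext fun h => funext fun s => by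
      change piIicSplit φ hG hS (piIicGlue φ hUS hTS h) s = h s
      by_cases hs : (s : α) ∈ U
      · rw [piIicSplit_of_mem φ hG hS _ hs, piIicGlue_self, φ.symm_apply_apply]
      · rw [piIicSplit_of_notMem φ hG hS _ hs,
          piIicGlue_of_ne φ hUS hTS h fun e => hGS (e ▸ s.2)])

theorem iSup_piIicRefine (hφ : ∀ h, (φ h : α) = ⨆ u, (h u : α))
    (h : ∀ s : S, Iic (s : α)) :
    ⨆ t, (piIicRefine φ hG hGS hUS hTS hS hUT h t : α) = ⨆ s, (h s : α) := by
  refine le_antisymm (iSup_le fun t => ?_) (iSup_le fun s => ?_)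
  · change (piIicGlue φ hUS hTS h t : α) ≤ _
    by_cases ht : (t : α) = G
    · obtain rfl : t = ⟨G, hG⟩ := Subtype.ext ht
      rw [piIicGlue_self, hφ]
      exact iSup_le fun u => le_iSup_of_le ⟨u, hUS u.2⟩ le_rfl
    · rw [piIicGlue_of_ne φ hUS hTS h ht]
      exact le_iSup_of_le _ le_rfl
  · by_cases hs : (s : α) ∈ U
    · refine le_iSup_of_le (⟨G, hG⟩ : T) ?_
      change _ ≤ (piIicGlue φ hUS hTS h ⟨G, hG⟩ : α)
      rw [piIicGlue_self, hφ]
      exact le_iSup_of_le ⟨s, hs⟩ le_rfl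
    · refine le_iSup_of_le (⟨s, (hS s.2).resolve_left hs⟩ : T) ?_
      change _ ≤ (piIicGlue φ hUS hTS h ⟨s, _⟩ : α)
      rw [piIicGlue_of_ne φ hUS hTS h fun e => hGS (e ▸ s.2)]

end Refine

section BuildingSet

variable {α : Type*} [CompleteLattice α] {𝓖 𝓖' : Set α} {F G : α}

theorem exists_mem_maxUnder_ge [Finite α] {H : α} (hH : H ∈ 𝓖) (hHF : H ≤ F) :
    ∃ M ∈ maxUnder 𝓖 F, H ≤ M := by
  obtain ⟨M, ⟨hM, hMF, hHM⟩, hmax⟩ :=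
    (toFinite {G | G ∈ 𝓖 ∧ G ≤ F ∧ H ≤ G}).exists_maximal ⟨H, hH, hHF, le_rfl⟩
  exact ⟨M, ⟨hM, hMF, fun G' hG' hG'F hMG' =>
    (hmax ⟨hG', hG'F, hHM.trans hMG'⟩ hMG').antisymm hMG'⟩, hHM⟩

theorem IsBuildingSet.disjoint_of_mem_maxUnder (h𝓖 : IsBuildingSet 𝓖) (hF : F ≠ ⊥)
    {M M' : α} (hM : M ∈ maxUnder 𝓖 F) (hM' : M' ∈ maxUnder 𝓖 F) (hne : M ≠ M') :
    Disjoint M M' := by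
  classical
  obtain ⟨φ, hφ⟩ := h𝓖.2 F hF
  let e (N : maxUnder 𝓖 F) : ∀ G : maxUnder 𝓖 F, Iic (G : α) :=
    fun G => if G = N then ⊤ else ⊥
  have he (N) : (φ (e N) : α) = N := by
    rw [hφ]
    refine le_antisymm (iSup_le fun G => ?_) (le_iSup_of_le N (by simp [e]))
    by_cases hG : G = N
    · subst hG; simp [e]
    · simp [e, hG]
  have hinf : e ⟨M, hM⟩ ⊓ e ⟨M', hM'⟩ = ⊥ := by
    funext G
    by_cases hG : G = ⟨M, hM⟩
    · have : G ≠ ⟨M', hM'⟩ := hG ▸ fun h => hne (congrArg Subtype.val h)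
      simp [e, this]
    · simp [e, hG]
  have := congrArg Subtype.val (φ.map_inf (e ⟨M, hM⟩) (e ⟨M', hM'⟩))
  rw [hinf, φ.map_bot, Iic.coe_inf, he, he] at this
  exact disjoint_iff.mpr this.symm

theorem maxUnder_sdiff_singleton_of_notMem [Finite α] (hG : G ∉ maxUnder 𝓖' F) :
    maxUnder (𝓖' \ {G}) F = maxUnder 𝓖' F := by
  ext H
  refine ⟨fun hH => ?_, fun hH => ?_⟩
  · obtain ⟨M, hM, hHM⟩ := exists_mem_maxUnder_ge hH.1.1 hH.2.1
    have hMG : M ≠ G := fun e => hG (e ▸ hM)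
    exact hH.2.2 M ⟨hM.1, hMG⟩ hM.2.1 hHM ▸ hM
  · exact ⟨⟨hH.1, fun e => hG (e ▸ hH)⟩, hH.2.1, fun H' hH' => hH.2.2 H' hH'.1⟩

theorem maxUnder_subset_maxUnder_sdiff_singleton [Finite α] (h𝓖 : IsBuildingSet 𝓖)
    (h𝓖' : IsBuildingSet 𝓖') (hsub : 𝓖 ⊆ 𝓖') (hG𝓖 : G ∉ 𝓖)
    (hmin : ∀ H ∈ 𝓖', H < G → H ∈ 𝓖) (hF : F ≠ ⊥) (hGF : G ∈ maxUnder 𝓖' F) :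
    maxUnder 𝓖 G ⊆ maxUnder (𝓖' \ {G}) F := by
  intro t ht
  refine ⟨⟨hsub ht.1, fun e => hG𝓖 (e ▸ ht.1)⟩, ht.2.1.trans hGF.2.1, fun H hH hHF htH => ?_⟩
  obtain ⟨M, hM, hHM⟩ := exists_mem_maxUnder_ge hH.1 hHF
  -- `t` lies below both `M` and `G`, and `t ≠ ⊥`, so `M = G` by disjointness.
  obtain rfl : M = G := by
    by_contra hMG
    exact h𝓖.1 t ht.1 <| disjoint_self.mp <|
      (h𝓖'.disjoint_of_mem_maxUnder hF hM hGF hMG).mono (htH.trans hHM) ht.2.1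
  exact ht.2.2 H (hmin H hH.1 (lt_of_le_of_ne hHM hH.2)) hHM htH

theorem maxUnder_sdiff_singleton_subset [Finite α] (hsub : 𝓖 ⊆ 𝓖') (hG𝓖 : G ∉ 𝓖)
    (hmin : ∀ H ∈ 𝓖', H < G → H ∈ 𝓖) (hGF : G ∈ maxUnder 𝓖' F) :
    maxUnder (𝓖' \ {G}) F ⊆ maxUnder 𝓖 G ∪ maxUnder 𝓖' F := by
  intro H hH
  obtain ⟨M, hM, hHM⟩ := exists_mem_maxUnder_ge hH.1.1 hH.2.1
  by_cases hMG : M = G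
  · subst hMG
    have hH𝓖 : H ∈ 𝓖 := hmin H hH.1.1 (lt_of_le_of_ne hHM hH.1.2)
    obtain ⟨t, ht, hHt⟩ := exists_mem_maxUnder_ge hH𝓖 hHM
    have htH : t = H :=
      hH.2.2 t ⟨hsub ht.1, fun e => hG𝓖 (e ▸ ht.1)⟩ (ht.2.1.trans hGF.2.1) hHt
    exact .inl (htH ▸ ht)
  · exact .inr (hH.2.2 M ⟨hM.1, hMG⟩ hM.2.1 hHM ▸ hM)

theorem disjoint_maxUnder_maxUnder (hG𝓖 : G ∉ 𝓖) (hGF : G ∈ maxUnder 𝓖' F) :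
    Disjoint (maxUnder 𝓖 G) (maxUnder 𝓖' F) :=
  disjoint_left.mpr fun _ ht htF => hG𝓖 (htF.2.2 G hGF.1 hGF.2.1 ht.2.1 ▸ ht.1)

theorem IsBuildingSet.sdiff_singleton_of_minimal [Finite α] (h𝓖 : IsBuildingSet 𝓖)
    (h𝓖' : IsBuildingSet 𝓖') (hsub : 𝓖 ⊆ 𝓖') (hG𝓖 : G ∉ 𝓖)
    (hmin : ∀ H ∈ 𝓖', H < G → H ∈ 𝓖) : IsBuildingSet (𝓖' \ {G}) := by
  refine ⟨fun H hH => h𝓖'.1 H hH.1, fun F hF => ?_⟩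
  by_cases hGF : G ∈ maxUnder 𝓖' F
  · obtain ⟨φ', hφ'⟩ := h𝓖'.2 F hF
    obtain ⟨φ, hφ⟩ := h𝓖.2 G (h𝓖'.1 G hGF.1)
    have hGS : G ∉ maxUnder (𝓖' \ {G}) F := fun h => h.1.2 rfl
    have hTS : maxUnder 𝓖' F \ {G} ⊆ maxUnder (𝓖' \ {G}) F := fun M hM =>
      ⟨⟨hM.1.1, hM.2⟩, hM.1.2.1, fun H hH => hM.1.2.2 H hH.1⟩
    let ψ := piIicRefine φ hGF hGS
      (maxUnder_subset_maxUnder_sdiff_singleton h𝓖 h𝓖' hsub hG𝓖 hmin hF hGF) hTS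
      (maxUnder_sdiff_singleton_subset hsub hG𝓖 hmin hGF) (disjoint_maxUnder_maxUnder hG𝓖 hGF)
    refine ⟨ψ.trans φ', fun h => ?_⟩
    rw [OrderIso.trans_apply, hφ', iSup_piIicRefine (hφ := hφ)]
  · rw [maxUnder_sdiff_singleton_of_notMem hGF]
    exact h𝓖'.2 F hF

theorem IsBuildingSet.exists_sdiff_singleton [Finite α] (h𝓖 : IsBuildingSet 𝓖)
    (h𝓖' : IsBuildingSet 𝓖') (hss : 𝓖 ⊂ 𝓖') : ∃ G ∈ 𝓖' \ 𝓖, IsBuildingSet (𝓖' \ {G}) := by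
  obtain ⟨G, hG, hmin⟩ := (toFinite (𝓖' \ 𝓖)).exists_minimal (nonempty_of_ssubset hss)
  refine ⟨G, hG, h𝓖.sdiff_singleton_of_minimal h𝓖' hss.subset hG.2 fun H hH hHG => ?_⟩
  by_contra hH𝓖
  exact (hHG.trans_le (hmin ⟨hH, hH𝓖⟩ hHG.le)).false

end BuildingSet

theorem building_set_filtration_general
    (𝓖 𝓖' : Set L) (h𝓖 : IsBuildingSet 𝓖) (h𝓖' : IsBuildingSet 𝓖')
    (hsub : 𝓖 ⊆ 𝓖') :
    ∃ (p : ℕ) (c : ℕ → Set L), c p = 𝓖 ∧ c 0 = 𝓖' ∧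
      (∀ i ≤ p, IsBuildingSet (c i)) ∧
      ∀ i < p, ∃ G : L, G ∉ c (i + 1) ∧ c i = insert G (c (i + 1)) :=
  exists_insert_chain hsub (toFinite _) h𝓖' fun _ hss hu => h𝓖.exists_sdiff_singleton hu hss

/-- if `𝓖 ⊆ 𝓖'` are two building sets of a finite geometric
lattice, then there is a filtration `𝓖 = 𝓖_p ⊂ ⋯ ⊂ 𝓖_0 = 𝓖'` of building
sets in which each consecutive containment adds exactly one element. -/
theorem building_set_filtration (hL : IsGeometricLattice L)
    (𝓖 𝓖' : Set L) (h𝓖 : IsBuildingSet 𝓖) (h𝓖' : IsBuildingSet 𝓖')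
    (hsub : 𝓖 ⊆ 𝓖') :
    ∃ (p : ℕ) (c : ℕ → Set L), c p = 𝓖 ∧ c 0 = 𝓖' ∧
      (∀ i ≤ p, IsBuildingSet (c i)) ∧
      ∀ i < p, ∃ G : L, G ∉ c (i + 1) ∧ c i = insert G (c (i + 1)) :=
  building_set_filtration_general 𝓖 𝓖' h𝓖 h𝓖' hsub
end
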